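/- Let 1 ≤ λ₁ ≤ λ₂, a ∈ ℝ, b ≥ 0, θ ∈ (0,∞), and let M₁⁺ = {(n,m₁,m₂) ∈ ℤ³ : n ≥ 0, 2^{nλ₁}|m₁| ≤ 2^{nλ₂}|m₂|, 1 ≤ |m₂|}. Then ∑_{(n,m₁,m₂)∈M₁⁺} (2^{na}·2^{-bnλ₂}·|m₂|^{-b})^θ < ∞ if and only if b·θ > 2 and θ(a - b·λ₂) + λ₂ - λ₁ < 0. -/
import Mathlib

open scoped NNReal ENNReal
lemma tsum_ofReal_ne_top_iff {α : Type*} {g : α → ℝ} (hg : ∀ i, 0 ≤ g i) :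
    (∑' i, ENNReal.ofReal (g i)) ≠ ⊤ ↔ Summable g := by
  rw [show (fun i => ENNReal.ofReal (g i)) = fun i => (((g i).toNNReal : ℝ≥0) : ℝ≥0∞) from rfl,
    ENNReal.tsum_coe_ne_top_iff_summable_coe]
  exact summable_congr fun i => by rw [Real.coe_toNNReal _ (hg i)]

lemma geom_ne_top_iff (A : ℝ) :
    (∑' n : ℕ, ENNReal.ofReal ((2:ℝ) ^ ((n:ℝ) * A))) ≠ ⊤ ↔ A < 0 := by
  have h2 : (0:ℝ) < (2:ℝ) ^ A := Real.rpow_pos_of_pos two_pos A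
  have he : ∀ n : ℕ, ENNReal.ofReal ((2:ℝ) ^ ((n:ℝ) * A)) = (ENNReal.ofReal ((2:ℝ) ^ A)) ^ n := by
    intro n
    rw [mul_comm, Real.rpow_mul (by norm_num : (0:ℝ) ≤ 2), Real.rpow_natCast,
      ← ENNReal.ofReal_pow h2.le]
  rw [tsum_congr he, ENNReal.tsum_geometric, Ne, ENNReal.inv_eq_top, tsub_eq_zero_iff_le,
    not_le, ENNReal.ofReal_lt_one, Real.rpow_lt_one_iff_of_pos two_pos]
  constructor
  · rintro (⟨-, h⟩ | ⟨h, -⟩)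
    · exact h
    · norm_num at h
  · intro h; exact Or.inl ⟨one_lt_two, h⟩

lemma shift_rpow_summable_iff (c : ℝ) :
    Summable (fun n : ℕ => ((n:ℝ) + 1) ^ c) ↔ c < -1 := by
  rw [show (fun n : ℕ => ((n:ℝ) + 1) ^ c) = (fun n : ℕ => ((n + 1 : ℕ):ℝ) ^ c) from
    funext fun n => by push_cast; rfl]
  rw [summable_nat_add_iff (f := fun n : ℕ => (n:ℝ) ^ c) 1, Real.summable_nat_rpow]

lemma if_rpow_summable_iff (c : ℝ) :
    Summable (fun n : ℕ => if n = 0 then (0:ℝ) else (n:ℝ) ^ c) ↔ c < -1 := by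
  rw [← summable_nat_add_iff (f := fun n : ℕ => if n = 0 then (0:ℝ) else (n:ℝ) ^ c) 1]
  refine (summable_congr fun n => ?_).trans (shift_rpow_summable_iff c)
  rw [if_neg (Nat.succ_ne_zero n)]
  push_cast
  rfl

lemma int_rpow_ne_top_iff (B : ℝ) :
    (∑' m : ℤ, (if m = 0 then 0 else ENNReal.ofReal (|(m:ℝ)| ^ (1 - B)))) ≠ ⊤ ↔ 2 < B := by
  have key : (∑' m : ℤ, (if m = 0 then 0 else ENNReal.ofReal (|(m:ℝ)| ^ (1 - B))))
      = (∑' n : ℕ, ENNReal.ofReal (if n = 0 then 0 else (n:ℝ) ^ (1 - B)))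
      + (∑' n : ℕ, ENNReal.ofReal (((n:ℝ) + 1) ^ (1 - B))) := by
    rw [← tsum_nat_add_neg_add_one ENNReal.summable, ← ENNReal.tsum_add]
    refine tsum_congr fun n => ?_
    congr 1
    · by_cases h : n = 0
      · simp [h]
      · rw [if_neg (by exact_mod_cast h : ((n:ℕ):ℤ) ≠ 0), if_neg h]
        congr 1
        rw [abs_of_nonneg (by positivity : (0:ℝ) ≤ (((n:ℕ):ℤ):ℝ))]
        norm_num
    · rw [if_neg (by omega : -((n:ℤ) + 1) ≠ 0)]
      congr 1
      push_cast
      rw [abs_neg, abs_of_nonneg (by positivity : (0:ℝ) ≤ (n:ℝ) + 1)]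
  rw [key, Ne, ENNReal.add_eq_top, not_or, ← Ne, ← Ne,
    tsum_ofReal_ne_top_iff (fun n => by positivity),
    tsum_ofReal_ne_top_iff (fun n => by positivity),
    if_rpow_summable_iff, shift_rpow_summable_iff]
  constructor
  · rintro ⟨h, -⟩; linarith
  · intro h; exact ⟨by linarith, by linarith⟩

def M1plus (l1 l2 : ℝ) : Set (ℤ × ℤ × ℤ) :=
  {p | 0 ≤ p.1 ∧
    (2 : ℝ) ^ ((p.1 : ℝ) * l1) * |(p.2.1 : ℝ)| ≤ (2 : ℝ) ^ ((p.1 : ℝ) * l2) * |(p.2.2 : ℝ)| ∧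
    1 ≤ |p.2.2|}

theorem sum_M1plus_iff (l1 l2 a b θ : ℝ) (h1 : 1 ≤ l1) (h12 : l1 ≤ l2)
    (hb : 0 ≤ b) (hθ : 0 < θ) :
    Summable (fun p : M1plus l1 l2 =>
        ((2 : ℝ) ^ (((p : ℤ × ℤ × ℤ).1 : ℝ) * a) *
         (2 : ℝ) ^ (-(b * ((p : ℤ × ℤ × ℤ).1 : ℝ) * l2)) *
         |((p : ℤ × ℤ × ℤ).2.2 : ℝ)| ^ (-b)) ^ θ) ↔
      (2 < b * θ ∧ θ * (a - b * l2) + l2 - l1 < 0) := by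
  have hl : 0 ≤ l2 - l1 := sub_nonneg.mpr h12
  set C := θ * (a - b * l2) with hC
  set B := b * θ with hB
  set A := C + l2 - l1 with hA
  let v : ℤ × ℤ × ℤ → ℝ := fun p =>
    ((2 : ℝ) ^ ((p.1 : ℝ) * a) * (2 : ℝ) ^ (-(b * (p.1 : ℝ) * l2)) *
      |(p.2.2 : ℝ)| ^ (-b)) ^ θ
  have hv0 : ∀ p : ℤ × ℤ × ℤ, 0 ≤ v p := fun p => by positivity
  let G : ℤ × ℤ × ℤ → ℝ≥0∞ := (M1plus l1 l2).indicator fun q => ENNReal.ofReal (v q)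
  let W : ℤ → ℤ → ℝ≥0∞ := fun n m => if 0 ≤ n ∧ m ≠ 0 then
    ENNReal.ofReal ((2 : ℝ) ^ ((n : ℝ) * A) * |(m : ℝ)| ^ (1 - B)) else 0
  let u : ℤ → ℝ≥0∞ := fun n => if 0 ≤ n then ENNReal.ofReal ((2 : ℝ) ^ ((n : ℝ) * A)) else 0
  let z : ℤ → ℝ≥0∞ := fun m => if m = 0 then 0 else ENNReal.ofReal (|(m : ℝ)| ^ (1 - B))
  -- membership characterization
  have hmem : ∀ n m₁ m₂ : ℤ, ((n, m₁, m₂) ∈ M1plus l1 l2) ↔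
      (0 ≤ n ∧ m₂ ≠ 0 ∧ |m₁| ≤ ⌊(2 : ℝ) ^ ((n : ℝ) * (l2 - l1)) * |(m₂ : ℝ)|⌋) := by
    intro n m₁ m₂
    have hkey : (2 : ℝ) ^ ((n : ℝ) * l2) * |(m₂ : ℝ)| =
        (2 : ℝ) ^ ((n : ℝ) * l1) * ((2 : ℝ) ^ ((n : ℝ) * (l2 - l1)) * |(m₂ : ℝ)|) := by
      rw [← mul_assoc, ← Real.rpow_add two_pos]
      rw [show (n : ℝ) * l1 + (n : ℝ) * (l2 - l1) = (n : ℝ) * l2 from by ring]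
    simp only [M1plus, Set.mem_setOf_eq]
    constructor
    · rintro ⟨hn, hineq, hm⟩
      refine ⟨hn, by rintro rfl; simp at hm, ?_⟩
      rw [Int.le_floor, Int.cast_abs]
      rw [hkey] at hineq
      exact le_of_mul_le_mul_left hineq (Real.rpow_pos_of_pos two_pos _)
    · rintro ⟨hn, hm, hflo⟩
      refine ⟨hn, ?_, Int.one_le_abs hm⟩
      rw [hkey]
      have h2 : |(m₁ : ℝ)| ≤ (2 : ℝ) ^ ((n : ℝ) * (l2 - l1)) * |(m₂ : ℝ)| := by
        rw [← Int.cast_abs]; exact Int.le_floor.mp hflo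
      exact mul_le_mul_of_nonneg_left h2 (Real.rpow_nonneg (by norm_num) _)
  -- value simplification on the set
  have hval : ∀ n m₁ m₂ : ℤ, (n, m₁, m₂) ∈ M1plus l1 l2 →
      v (n, m₁, m₂) = (2 : ℝ) ^ ((n : ℝ) * C) * |(m₂ : ℝ)| ^ (-B) := by
    intro n m₁ m₂ hp
    show ((2 : ℝ) ^ ((n : ℝ) * a) * (2 : ℝ) ^ (-(b * (n : ℝ) * l2)) *
      |(m₂ : ℝ)| ^ (-b)) ^ θ = _
    rw [← Real.rpow_add two_pos,
      Real.mul_rpow (Real.rpow_nonneg (by norm_num) _) (Real.rpow_nonneg (abs_nonneg _) _),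
      ← Real.rpow_mul (by norm_num : (0:ℝ) ≤ 2), ← Real.rpow_mul (abs_nonneg _)]
    rw [show ((n : ℝ) * a + -(b * (n : ℝ) * l2)) * θ = (n : ℝ) * C from by rw [hC]; ring,
      show (-b) * θ = -B from by rw [hB]; ring]
  -- inner sum over m₁
  have hinner : ∀ n m₂ : ℤ, W n m₂ ≤ (∑' m₁ : ℤ, G (n, m₁, m₂)) ∧
      (∑' m₁ : ℤ, G (n, m₁, m₂)) ≤ 3 * W n m₂ := by
    intro n m₂
    by_cases h : 0 ≤ n ∧ m₂ ≠ 0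
    case neg =>
      have hG : ∀ m₁ : ℤ, G (n, m₁, m₂) = 0 := fun m₁ =>
        Set.indicator_of_notMem
          (fun hm' => h ⟨((hmem n m₁ m₂).mp hm').1, ((hmem n m₁ m₂).mp hm').2.1⟩) _
      rw [tsum_congr hG, tsum_zero]
      simp [W, h]
    case pos =>
      obtain ⟨hn, hm⟩ := h
      set R : ℝ := (2 : ℝ) ^ ((n : ℝ) * (l2 - l1)) * |(m₂ : ℝ)| with hRdef
      have hm2 : (1 : ℝ) ≤ |(m₂ : ℝ)| := by
        rw [← Int.cast_abs]; exact_mod_cast Int.one_le_abs hm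
      have h2one : (1 : ℝ) ≤ (2 : ℝ) ^ ((n : ℝ) * (l2 - l1)) :=
        Real.one_le_rpow one_le_two (mul_nonneg (by exact_mod_cast hn) hl)
      have hR1 : (1 : ℝ) ≤ R := by
        rw [hRdef]; nlinarith
      have hR0 : (0 : ℝ) ≤ R := le_trans zero_le_one hR1
      set N : ℤ := ⌊R⌋ with hNdef
      have hN1 : 1 ≤ N := Int.le_floor.mpr (by exact_mod_cast hR1)
      have hNR : (N : ℝ) ≤ R := Int.floor_le R
      have hRN : R < (N : ℝ) + 1 := Int.lt_floor_add_one R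
      set v2 : ℝ≥0∞ := ENNReal.ofReal ((2 : ℝ) ^ ((n : ℝ) * C) * |(m₂ : ℝ)| ^ (-B)) with hv2
      have hGm : ∀ m₁ : ℤ, G (n, m₁, m₂) = if m₁ ∈ Finset.Icc (-N) N then v2 else 0 := by
        intro m₁
        show (M1plus l1 l2).indicator (fun q => ENNReal.ofReal (v q)) (n, m₁, m₂) = _
        by_cases hmm' : (n, m₁, m₂) ∈ M1plus l1 l2
        · rw [Set.indicator_of_mem hmm']
          rw [if_pos (by rw [Finset.mem_Icc, ← abs_le]; exact ((hmem n m₁ m₂).mp hmm').2.2)]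
          rw [hv2, hval n m₁ m₂ hmm']
        · rw [Set.indicator_of_notMem hmm', if_neg]
          rw [Finset.mem_Icc, ← abs_le]
          intro hcon; exact hmm' ((hmem n m₁ m₂).mpr ⟨hn, hm, hcon⟩)
      have hcard : (Finset.Icc (-N) N).card = (2 * N + 1).toNat := by
        rw [Int.card_Icc]
        congr 1
        ring
      have hsum : (∑' m₁ : ℤ, G (n, m₁, m₂)) = ((2 * N + 1).toNat : ℝ≥0∞) * v2 := by
        rw [tsum_congr hGm,
          tsum_eq_sum (s := Finset.Icc (-N) N) (fun b hb => if_neg hb),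
          Finset.sum_congr rfl (fun b hb => if_pos hb), Finset.sum_const, hcard,
          nsmul_eq_mul]
      have hc : (((2 * N + 1).toNat : ℕ) : ℝ) = 2 * (N : ℝ) + 1 := by
        have h0 : (0:ℤ) ≤ 2 * N + 1 := by omega
        rw [show (((2 * N + 1).toNat : ℕ) : ℝ) = (((2 * N + 1).toNat : ℤ) : ℝ) from by push_cast; ring,
          Int.toNat_of_nonneg h0]
        push_cast; ring
      have hWeq : W n m₂ = ENNReal.ofReal R * v2 := by
        show (if (0 ≤ n ∧ m₂ ≠ 0) then
            ENNReal.ofReal ((2 : ℝ) ^ ((n : ℝ) * A) * |(m₂ : ℝ)| ^ (1 - B)) else 0) = _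
        rw [if_pos ⟨hn, hm⟩, hv2, ← ENNReal.ofReal_mul hR0]
        congr 1
        rw [hRdef,
          show (1 - B) = 1 + -B from by ring,
          Real.rpow_add (lt_of_lt_of_le one_pos hm2), Real.rpow_one,
          show (n : ℝ) * A = (n : ℝ) * (l2 - l1) + (n : ℝ) * C from by rw [hA]; ring,
          Real.rpow_add two_pos]
        ring
      constructor
      · rw [hsum, hWeq]
        refine mul_le_mul_left ?_ v2
        rw [show ((2 * N + 1).toNat : ℝ≥0∞) = ENNReal.ofReal (((2 * N + 1).toNat : ℕ) : ℝ) from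
          (ENNReal.ofReal_natCast _).symm]
        exact ENNReal.ofReal_le_ofReal (by rw [hc]; linarith)
      · rw [hsum, hWeq]
        calc ((2 * N + 1).toNat : ℝ≥0∞) * v2 ≤ ENNReal.ofReal (3 * R) * v2 := by
              refine mul_le_mul_left ?_ v2
              rw [show ((2 * N + 1).toNat : ℝ≥0∞) = ENNReal.ofReal (((2 * N + 1).toNat : ℕ) : ℝ) from
                (ENNReal.ofReal_natCast _).symm]
              exact ENNReal.ofReal_le_ofReal (by rw [hc]; linarith)
          _ = 3 * (ENNReal.ofReal R * v2) := by
              rw [ENNReal.ofReal_mul (by norm_num : (0:ℝ) ≤ 3), ← mul_assoc]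
              norm_num
  -- Fubini
  have hG3 : (∑' p : ℤ × ℤ × ℤ, G p) = ∑' n : ℤ, ∑' m₂ : ℤ, ∑' m₁ : ℤ, G (n, m₁, m₂) := by
    rw [ENNReal.tsum_prod']
    refine tsum_congr fun n => ?_
    rw [ENNReal.tsum_prod']
    exact ENNReal.tsum_comm
  -- comparison
  have hGfin : (∑' p : ℤ × ℤ × ℤ, G p) ≠ ⊤ ↔ (∑' n : ℤ, ∑' m₂ : ℤ, W n m₂) ≠ ⊤ := by
    rw [hG3]
    constructor
    · intro h
      refine ne_top_of_le_ne_top h ?_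
      exact ENNReal.tsum_le_tsum fun n => ENNReal.tsum_le_tsum fun m => (hinner n m).1
    · intro h
      have hle : (∑' n : ℤ, ∑' m₂ : ℤ, ∑' m₁ : ℤ, G (n, m₁, m₂)) ≤
          3 * ∑' n : ℤ, ∑' m : ℤ, W n m := by
        rw [← ENNReal.tsum_mul_left]
        refine ENNReal.tsum_le_tsum fun n => ?_
        rw [← ENNReal.tsum_mul_left]
        exact ENNReal.tsum_le_tsum fun m => (hinner n m).2
      exact ne_top_of_le_ne_top (ENNReal.mul_ne_top (by norm_num) h) hle
  -- product structure
  have hQ : (∑' n : ℤ, ∑' m₂ : ℤ, W n m₂) = (∑' n : ℤ, u n) * (∑' m : ℤ, z m) := by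
    rw [← ENNReal.tsum_mul_right]
    refine tsum_congr fun n => ?_
    rw [← ENNReal.tsum_mul_left]
    refine tsum_congr fun m => ?_
    show (if 0 ≤ n ∧ m ≠ 0 then
        ENNReal.ofReal ((2 : ℝ) ^ ((n : ℝ) * A) * |(m : ℝ)| ^ (1 - B)) else 0) =
      (if 0 ≤ n then ENNReal.ofReal ((2 : ℝ) ^ ((n : ℝ) * A)) else 0) *
      (if m = 0 then 0 else ENNReal.ofReal (|(m : ℝ)| ^ (1 - B)))
    by_cases hn : 0 ≤ n <;> by_cases hm : m = 0 <;>
      simp [hn, hm, ENNReal.ofReal_mul (Real.rpow_nonneg (by norm_num : (0:ℝ) ≤ 2) _)]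
  -- the u-sum
  have hu : (∑' n : ℤ, u n) = ∑' n : ℕ, ENNReal.ofReal ((2 : ℝ) ^ ((n : ℝ) * A)) := by
    rw [← Function.Injective.tsum_eq (f := u) (g := fun k : ℕ => (k : ℤ))
      (fun x y hxy => by simpa using hxy)
      (by
        intro x hx
        rcases le_or_gt 0 x with h | h
        · exact ⟨x.toNat, by simp [Int.toNat_of_nonneg h]⟩
        · exfalso; apply hx; show (if 0 ≤ x then _ else 0) = 0; rw [if_neg (not_le.mpr h)])]
    refine tsum_congr fun k => ?_
    show (if 0 ≤ (k : ℤ) then ENNReal.ofReal ((2 : ℝ) ^ (((k : ℤ) : ℝ) * A)) else 0) = _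
    rw [if_pos (Int.ofNat_nonneg k)]
    norm_num
  -- nonvanishing
  have hune : (∑' n : ℤ, u n) ≠ 0 := by
    have h01 : u 0 = 1 := by
      show (if (0:ℤ) ≤ 0 then ENNReal.ofReal ((2 : ℝ) ^ (((0:ℤ) : ℝ) * A)) else 0) = 1
      rw [if_pos le_rfl]
      norm_num
    have hle := ENNReal.le_tsum (f := u) 0
    rw [h01] at hle
    intro h0
    rw [h0] at hle
    exact (by norm_num : ¬ ((1:ℝ≥0∞) ≤ 0)) hle
  have hzne : (∑' m : ℤ, z m) ≠ 0 := by
    have h01 : z 1 = 1 := by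
      show (if (1:ℤ) = 0 then 0 else ENNReal.ofReal (|((1:ℤ) : ℝ)| ^ (1 - B))) = 1
      rw [if_neg one_ne_zero]
      norm_num
    have hle := ENNReal.le_tsum (f := z) 1
    rw [h01] at hle
    intro h0
    rw [h0] at hle
    exact (by norm_num : ¬ ((1:ℝ≥0∞) ≤ 0)) hle
  have hmul : ((∑' n : ℤ, u n) * (∑' m : ℤ, z m) ≠ ⊤) ↔
      ((∑' n : ℤ, u n) ≠ ⊤ ∧ (∑' m : ℤ, z m) ≠ ⊤) := by
    rw [Ne, ENNReal.mul_eq_top]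
    constructor
    · intro h
      exact ⟨fun ht => h (Or.inr ⟨ht, hzne⟩), fun ht => h (Or.inl ⟨hune, ht⟩)⟩
    · rintro ⟨hx, hy⟩ (⟨-, ht⟩ | ⟨ht, -⟩)
      exacts [hy ht, hx ht]
  -- assemble
  have stepA : Summable (fun p : M1plus l1 l2 => v ↑p) ↔
      (∑' p : ℤ × ℤ × ℤ, G p) ≠ ⊤ := by
    rw [show (∑' p : ℤ × ℤ × ℤ, G p) =
        ∑' p : M1plus l1 l2, ENNReal.ofReal (v ↑p) from (tsum_subtype _ _).symm]
    exact (tsum_ofReal_ne_top_iff fun p => hv0 _).symm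
  rw [show (fun p : M1plus l1 l2 =>
        ((2 : ℝ) ^ (((p : ℤ × ℤ × ℤ).1 : ℝ) * a) *
         (2 : ℝ) ^ (-(b * ((p : ℤ × ℤ × ℤ).1 : ℝ) * l2)) *
         |((p : ℤ × ℤ × ℤ).2.2 : ℝ)| ^ (-b)) ^ θ) = (fun p : M1plus l1 l2 => v ↑p) from rfl]
  rw [stepA, hGfin, hQ, hmul, hu, geom_ne_top_iff A, int_rpow_ne_top_iff B]
  rw [show A < 0 ↔ C + l2 - l1 < 0 from by rw [hA]]
  exact and_comm
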